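/- arXiv:2009.12114 — 2 statements merged into one kernel-verified Lean document; each statement's English description precedes it below -/
import Mathlib

section
/- In the GVCG-t_L mechanism on a dichotomous domain, fix agent i and the other agents' preferences R_{-i}. If R_i and R'_i are two reports such that the bundle f_i(R_i, R_{-i}) is acceptable at R_i and the bundle f_i(R'_i, R_{-i}) is also acceptable at R_i, then p_i(R_i, R_{-i}) ≤ p_i(R'_i, R_{-i}). -/
open Finset

/-- A dichotomous preference over outcomes (bundle, payment). -/
structure DichPref (m : ℕ) where
  /-- the family of acceptable bundles -/
  S : Set (Finset (Fin m))
  /-- the willingness-to-pay map -/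
  w : ℝ → ℝ
  /-- the weak preference relation over outcomes -/
  pref : (Finset (Fin m) × ℝ) → (Finset (Fin m) × ℝ) → Prop
  S_nonempty : S.Nonempty
  empty_not_acc : (∅ : Finset (Fin m)) ∉ S
  supersets_closed : ∀ A ∈ S, ∀ B : Finset (Fin m), A ⊆ B → B ∈ S
  w_pos : ∀ t : ℝ, 0 < w t
  total : ∀ x y, pref x y ∨ pref y x
  transitive : ∀ x y z, pref x y → pref y z → pref x z
  money_mono : ∀ (A : Finset (Fin m)) (t t' : ℝ), t < t' →
    pref (A, t) (A, t') ∧ ¬ pref (A, t') (A, t)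
  indiff_unacc : ∀ A ∉ S, ∀ t : ℝ, pref (A, t) (∅, t) ∧ pref (∅, t) (A, t)
  indiff_acc : ∀ A ∈ S, ∀ t : ℝ, pref (A, t + w t) (∅, t) ∧ pref (∅, t) (A, t + w t)

open Classical in
/-- Willingness to pay at payment level `t`. -/
noncomputable def WP {m : ℕ} (R : DichPref m) (A : Finset (Fin m)) (t : ℝ) : ℝ :=
  if A ∈ R.S then R.w t else 0

/-- An allocation consists of pairwise-disjoint bundles. -/
def DisjointAlloc {n m : ℕ} (A : Fin n → Finset (Fin m)) : Prop :=
  ∀ i j : Fin n, i ≠ j → Disjoint (A i) (A j)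

/-- max over allocations of the sum of others' willingness to pay. -/
noncomputable def maxExt {n m : ℕ} (Rp : Fin n → DichPref m) (i : Fin n) (tL : ℝ) : ℝ :=
  sSup {x : ℝ | ∃ A : Fin n → Finset (Fin m), DisjointAlloc A ∧
    x = ∑ j ∈ Finset.univ.erase i, WP (Rp j) (A j) tL}

/-- `(f,p)` is a GVCG mechanism with loser's payment `tL`. -/
def IsGVCG {n m : ℕ} (f : (Fin n → DichPref m) → Fin n → Finset (Fin m))
    (p : (Fin n → DichPref m) → Fin n → ℝ) (tL : ℝ) : Prop :=
  ∀ Rp : Fin n → DichPref m,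
    DisjointAlloc (f Rp) ∧
    (∀ A : Fin n → Finset (Fin m), DisjointAlloc A →
      ∑ i, WP (Rp i) (A i) tL ≤ ∑ i, WP (Rp i) (f Rp i) tL) ∧
    (∀ i, p Rp i = tL + maxExt Rp i tL - ∑ j ∈ Finset.univ.erase i, WP (Rp j) (f Rp j) tL)

/-- `(A',t')` Pareto dominates `(A,t)` at profile `Rp`. -/
def Dominates {n m : ℕ} (Rp : Fin n → DichPref m)
    (A : Fin n → Finset (Fin m)) (t : Fin n → ℝ)
    (A' : Fin n → Finset (Fin m)) (t' : Fin n → ℝ) : Prop :=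
  DisjointAlloc A' ∧ (∀ i, (Rp i).pref (A' i, t' i) (A i, t i)) ∧
  (∑ i, t i ≤ ∑ i, t' i) ∧
  ((∃ i, ¬ (Rp i).pref (A i, t i) (A' i, t' i)) ∨ ∑ i, t i < ∑ i, t' i)

/-- single-minded dichotomous preference: unique minimal acceptable bundle. -/
def IsSM {m : ℕ} (R : DichPref m) : Prop :=
  ∃ S0 : Finset (Fin m), S0 ≠ ∅ ∧ R.S = {A : Finset (Fin m) | S0 ⊆ A}

/-- positive income effect: `w` weakly decreasing. -/
def PIE {m : ℕ} (R : DichPref m) : Prop :=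
  ∀ t t' : ℝ, t' < t → R.w t ≤ R.w t'

/-- In GVCG-`tL`, if both the truthful and the deviating bundle are acceptable at the
true preference `Rp i`, then the truthful payment is weakly smaller. -/
theorem stmt_4 (n m : ℕ) (tL : ℝ)
    (f : (Fin n → DichPref m) → Fin n → Finset (Fin m))
    (p : (Fin n → DichPref m) → Fin n → ℝ)
    (hG : IsGVCG f p tL) :
    ∀ (Rp : Fin n → DichPref m) (i : Fin n) (R' : DichPref m),
      f Rp i ∈ (Rp i).S →
      f (Function.update Rp i R') i ∈ (Rp i).S →
      p Rp i ≤ p (Function.update Rp i R') i := by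
  intro Rp i R' h1 h2
  set Rp' := Function.update Rp i R' with hRp'
  obtain ⟨hd, hmax, hp⟩ := hG Rp
  obtain ⟨hd', hmax', hp'⟩ := hG Rp'
  have hupd : ∀ j, j ≠ i → Rp' j = Rp j := fun j hj => Function.update_of_ne hj _ _
  have hmaxeq : maxExt Rp i tL = maxExt Rp' i tL := by
    unfold maxExt
    congr 1
    ext x
    constructor
    · rintro ⟨A, hA, rfl⟩
      exact ⟨A, hA, Finset.sum_congr rfl fun j hj => by
        rw [hupd j (Finset.ne_of_mem_erase hj)]⟩
    · rintro ⟨A, hA, rfl⟩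
      exact ⟨A, hA, Finset.sum_congr rfl fun j hj => by
        rw [hupd j (Finset.ne_of_mem_erase hj)]⟩
  have key := hmax (f Rp') hd'
  have e1 : ∑ j ∈ Finset.univ.erase i, WP (Rp j) (f Rp j) tL + WP (Rp i) (f Rp i) tL
      = ∑ j, WP (Rp j) (f Rp j) tL :=
    Finset.sum_erase_add _ _ (Finset.mem_univ i)
  have e2 : ∑ j ∈ Finset.univ.erase i, WP (Rp j) (f Rp' j) tL + WP (Rp i) (f Rp' i) tL
      = ∑ j, WP (Rp j) (f Rp' j) tL :=
    Finset.sum_erase_add _ _ (Finset.mem_univ i)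
  have w1 : WP (Rp i) (f Rp i) tL = (Rp i).w tL := if_pos h1
  have w2 : WP (Rp i) (f Rp' i) tL = (Rp i).w tL := if_pos h2
  have e3 : ∑ j ∈ Finset.univ.erase i, WP (Rp' j) (f Rp' j) tL
      = ∑ j ∈ Finset.univ.erase i, WP (Rp j) (f Rp' j) tL :=
    Finset.sum_congr rfl fun j hj => by rw [hupd j (Finset.ne_of_mem_erase hj)]
  have hle : ∑ j ∈ Finset.univ.erase i, WP (Rp' j) (f Rp' j) tL
      ≤ ∑ j ∈ Finset.univ.erase i, WP (Rp j) (f Rp j) tL := by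
    rw [e3]; linarith
  rw [hp i, hp' i, hmaxeq]
  linarith
end

section
/- Suppose n ≥ 3 agents and m ≥ 2 objects, and suppose every agent's preferences are single-minded dichotomous. Then for every t_L ∈ ℝ, the GVCG-t_L mechanism fails Pareto efficiency: there exists a profile of single-minded dichotomous preferences at which the GVCG-t_L outcome is Pareto dominated by another outcome profile. -/
/-! Bidders `a` and `b` want the single objects `x` and `y`, bidder `c` wants `{x, y}`; at `tL`
their willingness to pay is `1`, `1` and `3/2`. GVCG-`tL` gives `x` to `a` and `y` to `b`, each
paying `tL + 1/2`. The willingness to pay of `a` and `b` drops to `3/5` at payments up to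
`tL - 1/10` (a non-quasilinear income effect, without which VCG would be efficient), so each is
indifferent between its GVCG outcome and receiving nothing while paying `tL - 1/10`. Handing both
objects to `c` for `tL + 3/2` leaves every agent indifferent and raises revenue by
`3/2 - 2 * 3/5 = 3/10`. -/

open Finset

namespace DichPref

variable {m : ℕ}

/-- `ψ s` is the payment at which holding nothing is as good as holding `S0` at payment `s`;
outcomes are compared through this money equivalent, lower being better. -/
def smCost (S0 : Finset (Fin m)) (ψ : ℝ → ℝ) (o : Finset (Fin m) × ℝ) : ℝ :=
  if S0 ⊆ o.1 then ψ o.2 else o.2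

lemma smCost_of_subset {S0 A : Finset (Fin m)} (ψ : ℝ → ℝ) (t : ℝ) (h : S0 ⊆ A) :
    smCost S0 ψ (A, t) = ψ t := if_pos h

lemma smCost_of_not_subset {S0 A : Finset (Fin m)} (ψ : ℝ → ℝ) (t : ℝ) (h : ¬ S0 ⊆ A) :
    smCost S0 ψ (A, t) = t := if_neg h

lemma smCost_empty {S0 : Finset (Fin m)} (hS0 : S0 ≠ ∅) (ψ : ℝ → ℝ) (t : ℝ) :
    smCost S0 ψ (∅, t) = t :=
  smCost_of_not_subset ψ t (by rwa [subset_empty])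

lemma smCost_mono {S0 : Finset (Fin m)} {ψ : ℝ → ℝ} (hψ : StrictMono ψ) (A : Finset (Fin m))
    {t t' : ℝ} (h : t < t') : smCost S0 ψ (A, t) < smCost S0 ψ (A, t') := by
  unfold smCost
  split_ifs
  exacts [hψ h, h]

noncomputable def singleMinded (S0 : Finset (Fin m)) (hS0 : S0 ≠ ∅) (w ψ : ℝ → ℝ)
    (hw : ∀ t, 0 < w t) (hψ : StrictMono ψ) (hψw : ∀ t, ψ (t + w t) = t) : DichPref m where
  S := {A | S0 ⊆ A}
  w := w
  pref o o' := smCost S0 ψ o ≤ smCost S0 ψ o'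
  S_nonempty := ⟨S0, subset_refl S0⟩
  empty_not_acc := by simpa [subset_empty] using hS0
  supersets_closed _ hA _ hAB := (show S0 ⊆ _ from hA).trans hAB
  w_pos := hw
  total _ _ := le_total _ _
  transitive _ _ _ := le_trans
  money_mono A _ _ h := ⟨(smCost_mono hψ A h).le, (smCost_mono hψ A h).not_ge⟩
  indiff_unacc A hA t := by
    rw [smCost_of_not_subset ψ t hA, smCost_empty hS0]
    exact ⟨le_rfl, le_rfl⟩
  indiff_acc A hA t := by
    rw [smCost_of_subset ψ _ hA, hψw, smCost_empty hS0]
    exact ⟨le_rfl, le_rfl⟩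

section SingleMinded

variable {S0 : Finset (Fin m)} {hS0 : S0 ≠ ∅} {w ψ : ℝ → ℝ} {hw : ∀ t, 0 < w t}
  {hψ : StrictMono ψ} {hψw : ∀ t, ψ (t + w t) = t}

lemma singleMinded_pref_iff (o o' : Finset (Fin m) × ℝ) :
    (singleMinded S0 hS0 w ψ hw hψ hψw).pref o o' ↔ smCost S0 ψ o ≤ smCost S0 ψ o' :=
  Iff.rfl

lemma WP_singleMinded (A : Finset (Fin m)) (t : ℝ) :
    WP (singleMinded S0 hS0 w ψ hw hψ hψw) A t = if S0 ⊆ A then w t else 0 := by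
  unfold WP
  congr

lemma isSM_singleMinded : IsSM (singleMinded S0 hS0 w ψ hw hψ hψw) := ⟨S0, hS0, rfl⟩

end SingleMinded

end DichPref

open DichPref

lemma WP_nonneg {m : ℕ} (R : DichPref m) (A : Finset (Fin m)) (t : ℝ) : 0 ≤ WP R A t := by
  unfold WP
  split_ifs
  exacts [(R.w_pos t).le, le_rfl]

lemma WP_empty {m : ℕ} (R : DichPref m) (t : ℝ) : WP R ∅ t = 0 := if_neg R.empty_not_acc

lemma DisjointAlloc.sum_ite_mem_le {n m : ℕ} {A : Fin n → Finset (Fin m)} (hA : DisjointAlloc A)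
    (o : Fin m) {c : ℝ} (hc : 0 ≤ c) (s : Finset (Fin n)) :
    ∑ i ∈ s, (if o ∈ A i then c else 0) ≤ c := by
  by_cases ho : ∃ i ∈ s, o ∈ A i
  · obtain ⟨i, hi, hoi⟩ := ho
    rw [sum_eq_single_of_mem i hi fun j _ hji => if_neg fun hoj =>
      disjoint_left.mp (hA j i hji) hoj hoi, if_pos hoi]
  · push Not at ho
    rw [sum_eq_zero fun i hi => if_neg (ho i hi)]
    exact hc

lemma maxExt_eq {n m : ℕ} {Rp : Fin n → DichPref m} {i : Fin n} {tL v : ℝ}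
    {A₀ : Fin n → Finset (Fin m)} (hA₀ : DisjointAlloc A₀)
    (hv : ∑ j ∈ univ.erase i, WP (Rp j) (A₀ j) tL = v)
    (hle : ∀ A, DisjointAlloc A → ∑ j ∈ univ.erase i, WP (Rp j) (A j) tL ≤ v) :
    maxExt Rp i tL = v :=
  IsGreatest.csSup_eq ⟨⟨A₀, hA₀, hv.symm⟩, by rintro _ ⟨A, hA, rfl⟩; exact hle A hA⟩

lemma IsGVCG.sum_WP_eq {n m : ℕ} {f : (Fin n → DichPref m) → Fin n → Finset (Fin m)}
    {p : (Fin n → DichPref m) → Fin n → ℝ} {tL v : ℝ} (hG : IsGVCG f p tL)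
    {Rp : Fin n → DichPref m} {A₀ : Fin n → Finset (Fin m)} (hA₀ : DisjointAlloc A₀)
    (hv : ∑ i, WP (Rp i) (A₀ i) tL = v)
    (hle : ∀ A, DisjointAlloc A → ∑ i, WP (Rp i) (A i) tL ≤ v) :
    ∑ i, WP (Rp i) (f Rp i) tL = v :=
  le_antisymm (hle _ (hG Rp).1) (hv ▸ (hG Rp).2.1 A₀ hA₀)

lemma IsGVCG.payment_eq {n m : ℕ} {f : (Fin n → DichPref m) → Fin n → Finset (Fin m)}
    {p : (Fin n → DichPref m) → Fin n → ℝ} {tL : ℝ} (hG : IsGVCG f p tL)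
    (Rp : Fin n → DichPref m) (i : Fin n) :
    p Rp i = tL + maxExt Rp i tL
      - (∑ j, WP (Rp j) (f Rp j) tL - WP (Rp i) (f Rp i) tL) := by
  rw [(hG Rp).2.2 i, sum_erase_eq_sub (mem_univ i)]

lemma Fintype.sum_eq_add_add {ι M : Type*} [Fintype ι] [DecidableEq ι] [AddCommMonoid M]
    {g : ι → M} {a b c : ι} (hab : a ≠ b) (hac : a ≠ c) (hbc : b ≠ c)
    (h : ∀ i, i ≠ a → i ≠ b → i ≠ c → g i = 0) : ∑ i, g i = g a + g b + g c := by
  rw [← Finset.sum_subset (subset_univ {a, b, c}) fun i _ hi => by simp_all,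
    sum_insert (by simp [hab, hac]), sum_pair hbc, add_assoc]

section Ramp

variable (tL : ℝ)

noncomputable def rampWTP (t : ℝ) : ℝ :=
  if t ≤ tL - 1/10 then 3/5 else if t ≤ tL then 1 + 4 * (t - tL) else 1

noncomputable def rampWTPInv (s : ℝ) : ℝ :=
  if s ≤ tL + 1/2 then s - 3/5 else if s ≤ tL + 1 then (s + 4 * tL - 1) / 5 else s - 1

lemma rampWTP_pos (t : ℝ) : 0 < rampWTP tL t := by
  unfold rampWTP
  split_ifs <;> linarith

lemma rampWTP_self : rampWTP tL tL = 1 := by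
  simp [rampWTP]

lemma rampWTPInv_strictMono : StrictMono (rampWTPInv tL) := by
  intro s s' h
  unfold rampWTPInv
  split_ifs <;> linarith

lemma rampWTPInv_add_rampWTP (t : ℝ) : rampWTPInv tL (t + rampWTP tL t) = t := by
  unfold rampWTPInv rampWTP
  split_ifs <;> linarith

lemma rampWTPInv_half : rampWTPInv tL (tL + 1/2) = tL - 1/10 := by
  unfold rampWTPInv
  split_ifs <;> linarith

end Ramp

lemma strictMono_sub_const (v : ℝ) : StrictMono (· - v) := fun _ _ h => sub_lt_sub_right h v

section Bidders

variable {m : ℕ}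

noncomputable def rampBidder (tL : ℝ) (o : Fin m) : DichPref m :=
  singleMinded {o} (singleton_ne_empty o) (rampWTP tL) (rampWTPInv tL) (rampWTP_pos tL)
    (rampWTPInv_strictMono tL) (rampWTPInv_add_rampWTP tL)

noncomputable def pairBidder (x y : Fin m) : DichPref m :=
  singleMinded {x, y} (insert_ne_empty x {y}) (fun _ => 3/2) (· - 3/2) (fun _ => by norm_num)
    (strictMono_sub_const (3/2)) (fun t => add_sub_cancel_right t (3/2))

lemma WP_rampBidder_self (tL : ℝ) (o : Fin m) (A : Finset (Fin m)) :
    WP (rampBidder tL o) A tL = if o ∈ A then 1 else 0 := by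
  simp [rampBidder, WP_singleMinded, rampWTP_self]

lemma WP_pairBidder (x y : Fin m) (A : Finset (Fin m)) (t : ℝ) :
    WP (pairBidder x y) A t = if x ∈ A ∧ y ∈ A then 3/2 else 0 := by
  rw [pairBidder, WP_singleMinded]
  simp [insert_subset_iff]

lemma rampBidder_pref (tL : ℝ) {o : Fin m} {A : Finset (Fin m)} (h : o ∈ A) :
    (rampBidder tL o).pref (∅, tL - 1/10) (A, tL + 1/2) := by
  rw [rampBidder, singleMinded_pref_iff, smCost_empty (singleton_ne_empty o),
    smCost_of_subset _ _ (singleton_subset_iff.mpr h), rampWTPInv_half]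

lemma pairBidder_pref_empty {x y : Fin m} {A : Finset (Fin m)} (h : ¬ {x, y} ⊆ A) (t : ℝ) :
    (pairBidder x y).pref (∅, t) (A, t) := by
  rw [pairBidder, singleMinded_pref_iff, smCost_empty (insert_ne_empty x {y}),
    smCost_of_not_subset _ _ h]

lemma pairBidder_pref_pair {x y : Fin m} {A : Finset (Fin m)} (h : ¬ {x, y} ⊆ A) (t : ℝ) :
    (pairBidder x y).pref ({x, y}, t + 3/2) (A, t) := by
  rw [pairBidder, singleMinded_pref_iff, smCost_of_subset _ _ subset_rfl,
    smCost_of_not_subset _ _ h, add_sub_cancel_right]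

end Bidders

section Profile

variable {n m : ℕ} {tL : ℝ} {a b i : Fin n} {x y : Fin m} {A : Fin n → Finset (Fin m)}

noncomputable def counterProfile (tL : ℝ) (a b : Fin n) (x y : Fin m) (i : Fin n) : DichPref m :=
  if i = a then rampBidder tL x else if i = b then rampBidder tL y else pairBidder x y

lemma counterProfile_left : counterProfile tL a b x y a = rampBidder tL x := if_pos rfl

lemma counterProfile_right (hab : a ≠ b) : counterProfile tL a b x y b = rampBidder tL y := by
  rw [counterProfile, if_neg hab.symm, if_pos rfl]

lemma counterProfile_of_ne (hia : i ≠ a) (hib : i ≠ b) :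
    counterProfile tL a b x y i = pairBidder x y := by
  rw [counterProfile, if_neg hia, if_neg hib]

lemma counterProfile_swap (hab : a ≠ b) : counterProfile tL b a y x = counterProfile tL a b x y := by
  funext i
  by_cases hia : i = a
  · subst hia
    rw [counterProfile_right hab.symm, counterProfile_left]
  by_cases hib : i = b
  · subst hib
    rw [counterProfile_left, counterProfile_right hab]
  rw [counterProfile_of_ne hib hia, counterProfile_of_ne hia hib, pairBidder, pairBidder]
  simp_rw [pair_comm]

lemma isSM_counterProfile (tL : ℝ) (a b : Fin n) (x y : Fin m) (i : Fin n) :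
    IsSM (counterProfile tL a b x y i) := by
  unfold counterProfile rampBidder pairBidder
  split_ifs <;> exact isSM_singleMinded

lemma WP_counterProfile_left (A : Finset (Fin m)) :
    WP (counterProfile tL a b x y a) A tL = if x ∈ A then 1 else 0 := by
  rw [counterProfile_left, WP_rampBidder_self]

lemma WP_counterProfile_le (i : Fin n) (A : Finset (Fin m)) :
    WP (counterProfile tL a b x y i) A tL
      ≤ (if x ∈ A then 1 else 0) + (if y ∈ A then 1 else 0) := by
  unfold counterProfile
  split_ifs <;>
    simp only [WP_rampBidder_self, WP_pairBidder] <;> split_ifs <;> grind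

lemma WP_counterProfile_le_of_ne_left (hia : i ≠ a) (A : Finset (Fin m)) :
    WP (counterProfile tL a b x y i) A tL ≤ if y ∈ A then 3/2 else 0 := by
  unfold counterProfile
  split_ifs <;>
    simp only [WP_rampBidder_self, WP_pairBidder] <;> split_ifs <;> grind

lemma sum_WP_counterProfile_le (hA : DisjointAlloc A) :
    ∑ i, WP (counterProfile tL a b x y i) (A i) tL ≤ 2 :=
  calc ∑ i, WP (counterProfile tL a b x y i) (A i) tL
      ≤ ∑ i, ((if x ∈ A i then 1 else 0) + (if y ∈ A i then 1 else 0)) :=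
        sum_le_sum fun i _ => WP_counterProfile_le i (A i)
    _ ≤ 1 + 1 := by
        rw [sum_add_distrib]
        exact add_le_add (hA.sum_ite_mem_le x zero_le_one _) (hA.sum_ite_mem_le y zero_le_one _)
    _ = 2 := one_add_one_eq_two

lemma sum_erase_left_WP_counterProfile_le (hA : DisjointAlloc A) :
    ∑ j ∈ univ.erase a, WP (counterProfile tL a b x y j) (A j) tL ≤ 3/2 :=
  (sum_le_sum fun j hj => WP_counterProfile_le_of_ne_left (ne_of_mem_erase hj) (A j)).trans
    (hA.sum_ite_mem_le y (by norm_num) _)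

lemma sum_erase_right_WP_counterProfile_le (hab : a ≠ b) (hA : DisjointAlloc A) :
    ∑ j ∈ univ.erase b, WP (counterProfile tL a b x y j) (A j) tL ≤ 3/2 := by
  have h := sum_erase_left_WP_counterProfile_le (tL := tL) (a := b) (b := a) (x := y) (y := x) hA
  rwa [counterProfile_swap hab] at h

end Profile

section Allocations

variable {n m : ℕ} {tL : ℝ} {a b c i : Fin n} {x y : Fin m}

def singlesAlloc (a b : Fin n) (x y : Fin m) (i : Fin n) : Finset (Fin m) :=
  if i = a then {x} else if i = b then {y} else ∅

def pairAlloc (c : Fin n) (x y : Fin m) (i : Fin n) : Finset (Fin m) :=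
  if i = c then {x, y} else ∅

lemma disjointAlloc_singlesAlloc (hxy : x ≠ y) : DisjointAlloc (singlesAlloc a b x y) := by
  intro i j hij
  unfold singlesAlloc
  split_ifs <;> simp_all [eq_comm]

lemma disjointAlloc_pairAlloc (c : Fin n) (x y : Fin m) : DisjointAlloc (pairAlloc c x y) := by
  intro i j hij
  unfold pairAlloc
  split_ifs <;> simp_all

lemma sum_WP_singlesAlloc (hab : a ≠ b) :
    ∑ i, WP (counterProfile tL a b x y i) (singlesAlloc a b x y i) tL = 2 := by
  rw [Fintype.sum_eq_add a b hab fun i ⟨hia, hib⟩ => by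
      rw [singlesAlloc, if_neg hia, if_neg hib, WP_empty],
    singlesAlloc, if_pos rfl, WP_counterProfile_left, singlesAlloc, if_neg hab.symm, if_pos rfl,
    counterProfile_right hab, WP_rampBidder_self]
  norm_num

lemma sum_WP_pairAlloc (hca : c ≠ a) (hcb : c ≠ b) :
    ∑ i, WP (counterProfile tL a b x y i) (pairAlloc c x y i) tL = 3/2 := by
  rw [Fintype.sum_eq_single c fun i hic => by rw [pairAlloc, if_neg hic, WP_empty],
    pairAlloc, if_pos rfl, counterProfile_of_ne hca hcb, WP_pairBidder]
  simp

lemma maxExt_counterProfile_left (hca : c ≠ a) (hcb : c ≠ b) :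
    maxExt (counterProfile tL a b x y) a tL = 3/2 :=
  maxExt_eq (disjointAlloc_pairAlloc c x y)
    (by rw [sum_erase_eq_sub (mem_univ a), sum_WP_pairAlloc hca hcb, pairAlloc, if_neg hca.symm,
      WP_empty, sub_zero])
    fun _ hA => sum_erase_left_WP_counterProfile_le hA

lemma maxExt_counterProfile_right (hab : a ≠ b) (hca : c ≠ a) (hcb : c ≠ b) :
    maxExt (counterProfile tL a b x y) b tL = 3/2 := by
  rw [← counterProfile_swap hab]
  exact maxExt_counterProfile_left hcb hca

lemma maxExt_counterProfile_of_ne (hab : a ≠ b) (hxy : x ≠ y) (hia : i ≠ a) (hib : i ≠ b) :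
    maxExt (counterProfile tL a b x y) i tL = 2 :=
  maxExt_eq (disjointAlloc_singlesAlloc hxy)
    (by rw [sum_erase_eq_sub (mem_univ i), sum_WP_singlesAlloc hab, singlesAlloc,
      if_neg hia, if_neg hib, WP_empty, sub_zero])
    fun A hA => (sum_le_sum_of_subset_of_nonneg (erase_subset i univ) fun j _ _ =>
      WP_nonneg _ _ _).trans (sum_WP_counterProfile_le hA)

end Allocations

noncomputable def reallocPayment {n : ℕ} (tL : ℝ) (a b c i : Fin n) : ℝ :=
  if i = c then tL + 3/2 else if i = a ∨ i = b then tL - 1/10 else tL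

namespace IsGVCG

variable {n m : ℕ} {tL : ℝ} {a b c i : Fin n} {x y : Fin m}
  {f : (Fin n → DichPref m) → Fin n → Finset (Fin m)} {p : (Fin n → DichPref m) → Fin n → ℝ}

lemma sum_WP_counterProfile (hG : IsGVCG f p tL) (hab : a ≠ b) (hxy : x ≠ y) :
    ∑ i, WP (counterProfile tL a b x y i) (f (counterProfile tL a b x y) i) tL = 2 :=
  hG.sum_WP_eq (disjointAlloc_singlesAlloc hxy) (sum_WP_singlesAlloc hab)
    fun _ hA => sum_WP_counterProfile_le hA

/-- Without `x`, agent `a` contributes nothing and the others reach at most `3/2 < 2`. -/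
lemma mem_counterProfile_left (hG : IsGVCG f p tL) (hab : a ≠ b) (hxy : x ≠ y) :
    x ∈ f (counterProfile tL a b x y) a := by
  by_contra hx
  have hsum := hG.sum_WP_counterProfile hab hxy
  rw [← add_sum_erase _ _ (mem_univ a), WP_counterProfile_left, if_neg hx, zero_add] at hsum
  exact absurd (hsum.symm.trans_le (sum_erase_left_WP_counterProfile_le (hG _).1)) (by norm_num)

lemma mem_counterProfile_right (hG : IsGVCG f p tL) (hab : a ≠ b) (hxy : x ≠ y) :
    y ∈ f (counterProfile tL a b x y) b := by
  have h := hG.mem_counterProfile_left hab.symm hxy.symm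
  rwa [counterProfile_swap hab] at h

lemma notMem_counterProfile_of_ne (hG : IsGVCG f p tL) (hab : a ≠ b) (hxy : x ≠ y)
    (hia : i ≠ a) : x ∉ f (counterProfile tL a b x y) i := fun hx =>
  disjoint_left.mp ((hG _).1 i a hia) hx (hG.mem_counterProfile_left hab hxy)

lemma payment_counterProfile_left (hG : IsGVCG f p tL) (hab : a ≠ b) (hxy : x ≠ y)
    (hca : c ≠ a) (hcb : c ≠ b) : p (counterProfile tL a b x y) a = tL + 1/2 := by
  rw [hG.payment_eq, maxExt_counterProfile_left hca hcb, hG.sum_WP_counterProfile hab hxy,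
    WP_counterProfile_left, if_pos (hG.mem_counterProfile_left hab hxy)]
  ring

lemma payment_counterProfile_right (hG : IsGVCG f p tL) (hab : a ≠ b) (hxy : x ≠ y)
    (hca : c ≠ a) (hcb : c ≠ b) : p (counterProfile tL a b x y) b = tL + 1/2 := by
  rw [← counterProfile_swap hab]
  exact hG.payment_counterProfile_left hab.symm hxy.symm hcb hca

lemma payment_counterProfile_of_ne (hG : IsGVCG f p tL) (hab : a ≠ b) (hxy : x ≠ y)
    (hia : i ≠ a) (hib : i ≠ b) : p (counterProfile tL a b x y) i = tL := by
  rw [hG.payment_eq, maxExt_counterProfile_of_ne hab hxy hia hib,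
    hG.sum_WP_counterProfile hab hxy, counterProfile_of_ne hia hib, WP_pairBidder,
    if_neg fun h => hG.notMem_counterProfile_of_ne hab hxy hia h.1]
  ring

lemma pref_pairAlloc_counterProfile (hG : IsGVCG f p tL) (hab : a ≠ b) (hca : c ≠ a)
    (hcb : c ≠ b) (hxy : x ≠ y) (i : Fin n) :
    (counterProfile tL a b x y i).pref (pairAlloc c x y i, reallocPayment tL a b c i)
      (f (counterProfile tL a b x y) i, p (counterProfile tL a b x y) i) := by
  by_cases hia : i = a
  · subst hia
    rw [counterProfile_left, pairAlloc, if_neg hca.symm, reallocPayment, if_neg hca.symm,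
      if_pos (Or.inl rfl), hG.payment_counterProfile_left hab hxy hca hcb]
    exact rampBidder_pref tL (hG.mem_counterProfile_left hab hxy)
  by_cases hib : i = b
  · subst hib
    rw [counterProfile_right hab, pairAlloc, if_neg hcb.symm, reallocPayment, if_neg hcb.symm,
      if_pos (Or.inr rfl), hG.payment_counterProfile_right hab hxy hca hcb]
    exact rampBidder_pref tL (hG.mem_counterProfile_right hab hxy)
  have hpair : ¬ {x, y} ⊆ f (counterProfile tL a b x y) i := fun h =>
    hG.notMem_counterProfile_of_ne hab hxy hia (h (mem_insert_self x {y}))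
  rw [counterProfile_of_ne hia hib, pairAlloc, reallocPayment,
    hG.payment_counterProfile_of_ne hab hxy hia hib]
  by_cases hic : i = c
  · rw [if_pos hic, if_pos hic]
    exact pairBidder_pref_pair hpair tL
  · rw [if_neg hic, if_neg hic, if_neg (not_or.mpr ⟨hia, hib⟩)]
    exact pairBidder_pref_empty hpair tL

/-- Agents `a` and `b` each give up `3/5`, the pair bidder adds `3/2`. -/
lemma sum_payment_lt_reallocPayment (hG : IsGVCG f p tL) (hab : a ≠ b) (hca : c ≠ a)
    (hcb : c ≠ b) (hxy : x ≠ y) :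
    ∑ i, p (counterProfile tL a b x y) i < ∑ i, reallocPayment tL a b c i := by
  have hgain : ∑ i, (reallocPayment tL a b c i - p (counterProfile tL a b x y) i) = 3/10 := by
    rw [Fintype.sum_eq_add_add hab hca.symm hcb.symm fun i hia hib hic => by
        rw [reallocPayment, if_neg hic, if_neg (not_or.mpr ⟨hia, hib⟩),
          hG.payment_counterProfile_of_ne hab hxy hia hib, sub_self],
      hG.payment_counterProfile_left hab hxy hca hcb,
      hG.payment_counterProfile_right hab hxy hca hcb,
      hG.payment_counterProfile_of_ne hab hxy hca hcb]
    simp only [reallocPayment, if_neg hca.symm, if_neg hcb.symm, true_or, or_true, if_true]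
    ring
  rw [sum_sub_distrib] at hgain
  linarith

end IsGVCG

/-- With `n ≥ 3` agents and `m ≥ 2` objects, every GVCG-`tL` mechanism fails Pareto
efficiency at some profile of single-minded dichotomous preferences. -/
theorem stmt_8 (n m : ℕ) (hn : 3 ≤ n) (hm : 2 ≤ m) (tL : ℝ)
    (f : (Fin n → DichPref m) → Fin n → Finset (Fin m))
    (p : (Fin n → DichPref m) → Fin n → ℝ)
    (hG : IsGVCG f p tL) :
    ∃ Rp : Fin n → DichPref m, (∀ i, IsSM (Rp i)) ∧
      ∃ (A' : Fin n → Finset (Fin m)) (t' : Fin n → ℝ),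
        Dominates Rp (f Rp) (p Rp) A' t' := by
  let a : Fin n := ⟨0, by omega⟩
  let b : Fin n := ⟨1, by omega⟩
  let c : Fin n := ⟨2, by omega⟩
  let x : Fin m := ⟨0, by omega⟩
  let y : Fin m := ⟨1, by omega⟩
  have hab : a ≠ b := by simp [a, b, Fin.ext_iff]
  have hca : c ≠ a := by simp [a, c, Fin.ext_iff]
  have hcb : c ≠ b := by simp [b, c, Fin.ext_iff]
  have hxy : x ≠ y := by simp [x, y, Fin.ext_iff]
  have hgain := hG.sum_payment_lt_reallocPayment hab hca hcb hxy
  exact ⟨counterProfile tL a b x y, isSM_counterProfile tL a b x y, pairAlloc c x y,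
    reallocPayment tL a b c, disjointAlloc_pairAlloc c x y,
    hG.pref_pairAlloc_counterProfile hab hca hcb hxy, hgain.le, Or.inr hgain⟩
end
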